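/- arXiv:2211.01214 — 5 statements merged into one kernel-verified Lean document; each statement's English description precedes it below -/
import Mathlib

section
/- Let n ≥ 1, let α, β > 0 with α + β < 1, set c = 1 − α − β, and let Ã₁, …, Ã_T be n×n real row-stochastic matrices (nonnegative entries, each row sums to 1). Define ℒ_t = I − c·Ã_tᵀ, and define the sequence X₀ = I, X_t = α·ℒ_t⁻¹ + β·ℒ_t⁻¹·X_{t−1} for t ≥ 1 (each ℒ_t is invertible). Then for every t ≥ 0 the matrix X_t is column stochastic: all its entries are nonnegative and each of its columns sums to 1. -/
open Matrix BigOperators Finset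

def RowStochastic {n : ℕ} (A : Matrix (Fin n) (Fin n) ℝ) : Prop :=
  (∀ i j, 0 ≤ A i j) ∧ ∀ i, ∑ j, A i j = 1

def ColStochastic {n : ℕ} (A : Matrix (Fin n) (Fin n) ℝ) : Prop :=
  (∀ i j, 0 ≤ A i j) ∧ ∀ j, ∑ i, A i j = 1

lemma rs_pow {n : ℕ} {P : Matrix (Fin n) (Fin n) ℝ} (hP : RowStochastic P) (k : ℕ) :
    RowStochastic (P ^ k) := by
  induction k with
  | zero =>
    constructor
    · intro i j
      simp only [pow_zero, Matrix.one_apply]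
      split <;> norm_num
    · intro i
      simp [pow_zero, Matrix.one_apply]
  | succ k ih =>
    rw [pow_succ]
    constructor
    · intro i j
      rw [Matrix.mul_apply]
      exact Finset.sum_nonneg fun l _ => mul_nonneg (ih.1 i l) (hP.1 l j)
    · intro i
      simp only [Matrix.mul_apply]
      rw [Finset.sum_comm]
      calc ∑ l, ∑ j, (P ^ k) i l * P l j
          = ∑ l, (P ^ k) i l * ∑ j, P l j := by
            simp [Finset.mul_sum]
        _ = ∑ l, (P ^ k) i l := by
            simp [hP.2]
        _ = 1 := ih.2 i

lemma inv_lemma {n : ℕ} {c : ℝ} (hc0 : 0 < c) (hc1 : c < 1)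
    {P : Matrix (Fin n) (Fin n) ℝ} (hP : RowStochastic P) :
    (∀ i j, 0 ≤ (1 - c • P)⁻¹ i j) ∧ (∀ i, ∑ j, (1 - c • P)⁻¹ i j = 1 / (1 - c)) := by
  set g : Fin n → Fin n → ℕ → ℝ := fun i j k => c ^ k * (P ^ k) i j with hg
  have hgnn : ∀ i j k, 0 ≤ g i j k := fun i j k =>
    mul_nonneg (pow_nonneg hc0.le k) ((rs_pow hP k).1 i j)
  have hgle : ∀ i j k, g i j k ≤ c ^ k := by
    intro i j k
    have h1 : (P ^ k) i j ≤ 1 := by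
      calc (P ^ k) i j ≤ ∑ j', (P ^ k) i j' :=
            Finset.single_le_sum (fun j' _ => (rs_pow hP k).1 i j') (Finset.mem_univ j)
        _ = 1 := (rs_pow hP k).2 i
    calc g i j k = c ^ k * (P ^ k) i j := rfl
      _ ≤ c ^ k * 1 := by
          exact mul_le_mul_of_nonneg_left h1 (pow_nonneg hc0.le k)
      _ = c ^ k := mul_one _
  have hsum : ∀ i j, Summable (g i j) := fun i j =>
    Summable.of_nonneg_of_le (hgnn i j) (hgle i j) (summable_geometric_of_lt_one hc0.le hc1)
  set B : Matrix (Fin n) (Fin n) ℝ := Matrix.of fun i j => ∑' k, g i j k with hB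
  have hBL : B * (1 - c • P) = 1 := by
    ext i j
    rw [Matrix.mul_apply]
    have step1 : ∀ l, B i l * (1 - c • P) l j = ∑' k, g i l k * (1 - c • P) l j := by
      intro l
      exact (tsum_mul_right).symm
    simp only [step1]
    rw [← Summable.tsum_finsetSum (fun l _ => ((hsum i l).mul_right _))]
    have step2 : ∀ k, ∑ l, g i l k * (1 - c • P) l j = g i j k - g i j (k + 1) := by
      intro k
      have expand : ∀ l, g i l k * (1 - c • P) l j
          = c ^ k * ((P ^ k) i l * (1 : Matrix (Fin n) (Fin n) ℝ) l j)
            - c ^ (k + 1) * ((P ^ k) i l * P l j) := by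
        intro l
        simp only [hg, Matrix.sub_apply, Matrix.smul_apply, smul_eq_mul]
        ring
      simp only [expand, Finset.sum_sub_distrib, ← Finset.mul_sum]
      have e1 : ∑ l, (P ^ k) i l * (1 : Matrix (Fin n) (Fin n) ℝ) l j = (P ^ k) i j := by
        rw [← Matrix.mul_apply, mul_one]
      have e2 : ∑ l, (P ^ k) i l * P l j = (P ^ (k + 1)) i j := by
        rw [← Matrix.mul_apply, ← pow_succ]
      rw [e1, e2]
    simp only [step2]
    have hs := hsum i j
    have hs' : Summable fun k => g i j (k + 1) := (summable_nat_add_iff 1).2 hs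
    rw [Summable.tsum_sub hs hs', Summable.tsum_eq_zero_add hs]
    simp [hg]
  have hinv : (1 - c • P)⁻¹ = B := Matrix.inv_eq_left_inv hBL
  rw [hinv]
  constructor
  · intro i j
    exact tsum_nonneg (hgnn i j)
  · intro i
    have : ∑ j, B i j = ∑' k, ∑ j, g i j k := by
      exact (Summable.tsum_finsetSum (fun j _ => hsum i j)).symm
    rw [this]
    have e : ∀ k, ∑ j, g i j k = c ^ k := by
      intro k
      simp only [hg, ← Finset.mul_sum, (rs_pow hP k).2 i, mul_one]
    simp only [e]
    rw [tsum_geometric_of_lt_one hc0.le hc1]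
    rw [one_div]

theorem stmt_0 (n : ℕ) (hn : 1 ≤ n) (α β : ℝ) (hα : 0 < α) (hβ : 0 < β)
    (hαβ : α + β < 1) (c : ℝ) (hc : c = 1 - α - β)
    (T : ℕ) (A : ℕ → Matrix (Fin n) (Fin n) ℝ)
    (hA : ∀ t, 1 ≤ t → t ≤ T → RowStochastic (A t))
    (L : ℕ → Matrix (Fin n) (Fin n) ℝ)
    (hL : ∀ t, L t = 1 - c • (A t)ᵀ)
    (X : ℕ → Matrix (Fin n) (Fin n) ℝ)
    (hX0 : X 0 = 1)
    (hXt : ∀ t, 1 ≤ t → t ≤ T → X t = α • (L t)⁻¹ + β • ((L t)⁻¹ * X (t - 1))) :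
    ∀ t, t ≤ T → ColStochastic (X t) := by
  have hc0 : 0 < c := by rw [hc]; linarith
  have hc1 : c < 1 := by rw [hc]; linarith
  have h1c : 1 - c = α + β := by rw [hc]; ring
  have hab : 0 < α + β := by linarith
  intro t
  induction t with
  | zero =>
    intro _
    rw [hX0]
    constructor
    · intro i j
      simp only [Matrix.one_apply]
      split <;> norm_num
    · intro j
      simp [Matrix.one_apply]
  | succ t ih =>
    intro hT
    have hts : (1 : ℕ) ≤ t + 1 := by omega
    have hXrec := hXt (t + 1) hts hT
    simp only [Nat.add_sub_cancel] at hXrec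
    have hPt := hA (t + 1) hts hT
    obtain ⟨hBnn, hBrow⟩ := inv_lemma hc0 hc1 hPt
    have hLinv : (L (t + 1))⁻¹ = ((1 - c • A (t + 1))⁻¹)ᵀ := by
      rw [hL, Matrix.transpose_nonsing_inv]
      congr 1
      simp
    obtain ⟨hXnn, hXcol⟩ := ih (by omega)
    constructor
    · intro i j
      rw [hXrec, hLinv]
      simp only [Matrix.add_apply, Matrix.smul_apply, Matrix.mul_apply,
        Matrix.transpose_apply, smul_eq_mul]
      have t1 : 0 ≤ (1 - c • A (t + 1))⁻¹ j i := hBnn j i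
      have t2 : 0 ≤ ∑ k, (1 - c • A (t + 1))⁻¹ k i * X t k j :=
        Finset.sum_nonneg fun k _ => mul_nonneg (hBnn k i) (hXnn k j)
      have := mul_nonneg hα.le t1
      have := mul_nonneg hβ.le t2
      linarith
    · intro j
      rw [hXrec, hLinv]
      simp only [Matrix.add_apply, Matrix.smul_apply, Matrix.mul_apply,
        Matrix.transpose_apply, smul_eq_mul]
      rw [Finset.sum_add_distrib, ← Finset.mul_sum, ← Finset.mul_sum]
      have s1 : ∑ i, (1 - c • A (t + 1))⁻¹ j i = 1 / (α + β) := by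
        rw [hBrow j, h1c]
      have s2 : ∑ i, ∑ k, (1 - c • A (t + 1))⁻¹ k i * X t k j = 1 / (α + β) := by
        rw [Finset.sum_comm]
        calc ∑ k, ∑ i, (1 - c • A (t + 1))⁻¹ k i * X t k j
            = ∑ k, (∑ i, (1 - c • A (t + 1))⁻¹ k i) * X t k j := by
              simp [Finset.sum_mul]
          _ = ∑ k, (1 / (α + β)) * X t k j := by
              simp only [hBrow, h1c]
          _ = (1 / (α + β)) * ∑ k, X t k j := by rw [Finset.mul_sum]
          _ = 1 / (α + β) := by rw [hXcol j, mul_one]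
      rw [s1, s2]
      field_simp
end

section
/- Let n ≥ 1, let Ã be an n×n real row-stochastic matrix, let α, β > 0 with α + β < 1, set c = 1 − α − β, and let ℒ = I − c·Ãᵀ. Then the RWR diffusion kernel L^rwr = (α + β)·ℒ⁻¹ is column stochastic: all of its entries are nonnegative and each of its columns sums to 1. -/
open Matrix BigOperators Finset

attribute [local instance] Matrix.linftyOpNormedRing Matrix.linftyOpNormedAlgebra

theorem stmt_2 (n : ℕ) (hn : 1 ≤ n) (A : Matrix (Fin n) (Fin n) ℝ)
    (hA : RowStochastic A) (α β : ℝ) (hα : 0 < α) (hβ : 0 < β) (hαβ : α + β < 1)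
    (c : ℝ) (hc : c = 1 - α - β)
    (L : Matrix (Fin n) (Fin n) ℝ) (hL : L = 1 - c • Aᵀ) :
    ColStochastic ((α + β) • L⁻¹) := by
  have hc0 : 0 < c := by rw [hc]; linarith
  have hc1 : c < 1 := by rw [hc]; linarith
  set B : Matrix (Fin n) (Fin n) ℝ := c • A with hB
  have hBnn : ∀ i j, 0 ≤ B i j := fun i j => mul_nonneg hc0.le (hA.1 i j)
  have hBrow : ∀ i, ∑ j, B i j = c := by
    intro i
    simp only [hB, Matrix.smul_apply, smul_eq_mul, ← Finset.mul_sum, hA.2 i, mul_one]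
  -- norm of B
  have hnormB : ‖B‖ < 1 := by
    rw [Matrix.linfty_opNorm_def]
    have : ((Finset.univ : Finset (Fin n)).sup fun i => ∑ j, ‖B i j‖₊) ≤ Real.toNNReal c := by
      apply Finset.sup_le
      intro i _
      have : ∑ j, ‖B i j‖₊ = Real.toNNReal (∑ j, B i j) := by
        rw [Real.toNNReal_sum_of_nonneg (fun j _ => hBnn i j)]
        exact Finset.sum_congr rfl fun j _ => by
          rw [Real.toNNReal_eq_nnnorm_of_nonneg (hBnn i j)]
      rw [this, hBrow i]
    calc ((Finset.univ.sup fun i => ∑ j, ‖B i j‖₊ : NNReal) : ℝ)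
        ≤ ((Real.toNNReal c : NNReal) : ℝ) := by exact_mod_cast this
      _ = c := Real.coe_toNNReal _ hc0.le
      _ < 1 := hc1
  -- Neumann series unit
  set S : Matrix (Fin n) (Fin n) ℝ := ∑' k : ℕ, B ^ k with hS
  have hSl : S * (1 - B) = 1 := (Units.oneSub B hnormB).inv_mul
  have hSr : (1 - B) * S = 1 := (Units.oneSub B hnormB).mul_inv
  -- L⁻¹ = Sᵀ
  have hLT : L = (1 - B)ᵀ := by
    rw [hL]
    simp [hB, Matrix.transpose_sub, Matrix.transpose_smul]
  have hLinv : L⁻¹ = Sᵀ := by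
    apply Matrix.inv_eq_right_inv
    rw [hLT, ← Matrix.transpose_mul, hSl, Matrix.transpose_one]
  -- entrywise sums of powers
  have hsum : Summable (fun k : ℕ => B ^ k) :=
    summable_geometric_of_norm_lt_one hnormB
  have hentry : ∀ i j : Fin n, HasSum (fun k : ℕ => (B ^ k) i j) (S i j) := by
    intro i j
    have hcont : Continuous fun M : Matrix (Fin n) (Fin n) ℝ => M i j := by
      exact (continuous_apply j).comp (continuous_apply i)
    exact (hsum.hasSum.map (AddMonoidHom.mk' (fun M : Matrix (Fin n) (Fin n) ℝ => M i j)
      (fun _ _ => rfl)) hcont)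
  have hpownn : ∀ (k : ℕ) (i j : Fin n), 0 ≤ (B ^ k) i j := by
    intro k
    induction k with
    | zero => intro i j; by_cases h : i = j <;> simp [pow_zero, Matrix.one_apply, h]
    | succ k ih =>
        intro i j
        rw [pow_succ, Matrix.mul_apply]
        exact Finset.sum_nonneg fun l _ => mul_nonneg (ih i l) (hBnn l j)
  have hSnn : ∀ i j, 0 ≤ S i j := fun i j =>
    hasSum_le (fun k => hpownn k i j) hasSum_zero (hentry i j)
  -- row sums of S
  have hrowsum : ∀ i, ∑ j, S i j = (α + β)⁻¹ := by
    intro i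
    have h1 : S * ((1 : Matrix (Fin n) (Fin n) ℝ) - B) = 1 := hSl
    have h2 : ∀ i, ∑ j, ((1 : Matrix (Fin n) (Fin n) ℝ) - B) i j = α + β := by
      intro i
      simp only [Matrix.sub_apply, Finset.sum_sub_distrib, hBrow i]
      rw [Finset.sum_eq_single i (fun b _ hb => Matrix.one_apply_ne' hb) (by simp)]
      rw [Matrix.one_apply_eq, hc]; ring
    have h3 : ∑ j, (S * (1 - B)) i j = (α + β) * ∑ j, S i j := by
      simp only [Matrix.mul_apply]
      rw [Finset.sum_comm]
      calc ∑ l, ∑ j, S i l * (1 - B) l j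
          = ∑ l, S i l * ∑ j, (1 - B) l j :=
            Finset.sum_congr rfl fun l _ => (Finset.mul_sum _ _ _).symm
        _ = ∑ l, S i l * (α + β) := by simp_rw [h2]
        _ = (α + β) * ∑ j, S i j := by rw [← Finset.sum_mul, mul_comm]
    have h4 : ∑ j, (1 : Matrix (Fin n) (Fin n) ℝ) i j = 1 := by
      rw [Finset.sum_eq_single i (fun b _ hb => Matrix.one_apply_ne' hb) (by simp)]
      exact Matrix.one_apply_eq i
    have hab : (0:ℝ) < α + β := by linarith
    have := h3.symm.trans (by rw [h1, h4])
    rw [mul_comm] at this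
    exact eq_inv_of_mul_eq_one_left this
  constructor
  · intro i j
    rw [hLinv]
    exact mul_nonneg (by linarith) (hSnn j i)
  · intro j
    rw [hLinv]
    simp only [Matrix.smul_apply, Matrix.transpose_apply, smul_eq_mul]
    rw [← Finset.mul_sum, hrowsum j]
    field_simp
end

section
/- Let n ≥ 1, let α, β > 0 with α + β < 1, set c = 1 − α − β and γ = β/(α + β), and let Ã₁, …, Ã_T be n×n real row-stochastic matrices. For each t define ℒ_t = I − c·Ã_tᵀ and the RWR kernel L_t = (α + β)·ℒ_t⁻¹, and for j ≥ i define the product L_{j⇜i} = L_j · L_{j−1} ⋯ L_i (so L_{i⇜i} = L_i). Define X₀ = I and X_t = α·ℒ_t⁻¹ + β·ℒ_t⁻¹·X_{t−1} for t ≥ 1. Then for every t ≥ 1, X_t = (1 − γ)·Σ_{i=0}^{t−2} γ^i · L_{t⇜t−i} + γ^{t−1} · L_{t⇜1} (for t = 1 the sum is empty and X₁ = L₁). -/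
open Matrix BigOperators Finset

/-- The product `L j * L (j-1) * ⋯ * L i` (for `i ≤ j`; in particular
`chainProd L i i = L i`). -/
def chainProd {n : ℕ} (L : ℕ → Matrix (Fin n) (Fin n) ℝ) (j i : ℕ) :
    Matrix (Fin n) (Fin n) ℝ :=
  (((List.range (j + 1 - i)).map (fun k => L (j - k))).prod)

/-! With `M_t = (α+β) P_t` and `γ = β/(α+β)`, the recurrence `X_t = α P_t + β P_t X_{t-1}` reads
`X_t = (1-γ) M_t + γ M_t X_{t-1}`; unrolling it, stopping after `i` steps back contributes
`(1-γ) γ^i M_{t⇜t-i}` and running down to `X_0 = 1` contributes `γ^{t-1} M_{t⇜1}`.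
Since `M_{0⇜1}` is the empty product `1`, the closed form also covers `t = 0`, so the
induction can start at `X_0`. -/

section

variable {n : ℕ}

theorem chainProd_self (M : ℕ → Matrix (Fin n) (Fin n) ℝ) (j : ℕ) :
    chainProd M j j = M j := by
  simp [chainProd, List.range_succ]

theorem chainProd_succ_left (M : ℕ → Matrix (Fin n) (Fin n) ℝ) {j i : ℕ} (h : i ≤ j + 1) :
    chainProd M (j + 1) i = M (j + 1) * chainProd M j i := by
  rw [chainProd, chainProd, show j + 1 + 1 - i = j + 1 - i + 1 by omega,
    List.range_succ_eq_map]
  simp only [List.map_cons, List.map_map, List.prod_cons, Nat.sub_zero]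
  congr 2
  exact List.map_congr_left fun k _ => congrArg M (by simp)

theorem chainProd_zero_one (M : ℕ → Matrix (Fin n) (Fin n) ℝ) : chainProd M 0 1 = 1 := by
  simp [chainProd]

def rwrExpansion (M : ℕ → Matrix (Fin n) (Fin n) ℝ) (γ : ℝ) (t : ℕ) :
    Matrix (Fin n) (Fin n) ℝ :=
  (1 - γ) • (∑ i ∈ range (t - 1), γ ^ i • chainProd M t (t - i)) + γ ^ (t - 1) • chainProd M t 1

theorem rwrExpansion_zero (M : ℕ → Matrix (Fin n) (Fin n) ℝ) (γ : ℝ) :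
    rwrExpansion M γ 0 = 1 := by
  simp [rwrExpansion, chainProd_zero_one]

theorem rwrExpansion_succ (M : ℕ → Matrix (Fin n) (Fin n) ℝ) (γ : ℝ) (t : ℕ) :
    rwrExpansion M γ (t + 1) = (1 - γ) • M (t + 1) + γ • (M (t + 1) * rwrExpansion M γ t) := by
  rcases t with _ | p
  · simp [rwrExpansion, chainProd_self, chainProd_zero_one, ← add_smul]
  have hmul : ∀ i ≤ p + 1, M (p + 2) * chainProd M (p + 1) i = chainProd M (p + 2) i :=
    fun i hi => (chainProd_succ_left M (by omega)).symm
  simp only [rwrExpansion, Nat.add_sub_cancel, Matrix.mul_add, Matrix.mul_smul, Finset.mul_sum]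
  simp only [hmul _ (Nat.sub_le _ _), hmul 1 (by omega)]
  rw [sum_range_succ', Nat.sub_zero, pow_zero, one_smul, chainProd_self]
  simp only [show ∀ i, p + 1 + 1 - (i + 1) = p + 1 - i by omega, pow_succ', ← smul_smul,
    ← smul_sum]
  module

theorem eq_rwrExpansion_of_recurrence (M X : ℕ → Matrix (Fin n) (Fin n) ℝ) (γ : ℝ) (T : ℕ)
    (hX0 : X 0 = 1)
    (hX : ∀ t, 1 ≤ t → t ≤ T → X t = (1 - γ) • M t + γ • (M t * X (t - 1))) :
    ∀ t ≤ T, X t = rwrExpansion M γ t := by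
  intro t ht
  induction t with
  | zero => rw [hX0, rwrExpansion_zero]
  | succ t ih =>
    rw [hX (t + 1) (by omega) ht, Nat.add_sub_cancel, ih (by omega), rwrExpansion_succ]

end

theorem smul_add_smul_mul_eq_convex {K R : Type*} [Field K] [Ring R] [Algebra K R]
    {α β : K} (h : α + β ≠ 0) (P Y : R) :
    α • P + β • (P * Y) =
      (1 - β / (α + β)) • ((α + β) • P) + (β / (α + β)) • ((α + β) • P * Y) := by
  have hα : (1 - β / (α + β)) * (α + β) = α := by field_simp; ring
  have hβ : β / (α + β) * (α + β) = β := by field_simp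
  rw [smul_smul, hα, smul_mul_assoc, smul_smul, hβ]

theorem stmt_3_general (n : ℕ) (α β : ℝ) (hα : 0 < α) (hβ : 0 < β)
    (γ : ℝ) (hγ : γ = β / (α + β))
    (T : ℕ)
    (L : ℕ → Matrix (Fin n) (Fin n) ℝ)
    (Lr : ℕ → Matrix (Fin n) (Fin n) ℝ)
    (hLr : ∀ t, Lr t = (α + β) • (L t)⁻¹)
    (X : ℕ → Matrix (Fin n) (Fin n) ℝ)
    (hX0 : X 0 = 1)
    (hXt : ∀ t, 1 ≤ t → t ≤ T → X t = α • (L t)⁻¹ + β • ((L t)⁻¹ * X (t - 1))) :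
    ∀ t, 1 ≤ t → t ≤ T →
      X t = (1 - γ) • (∑ i ∈ Finset.range (t - 1), γ ^ i • chainProd Lr t (t - i))
            + γ ^ (t - 1) • chainProd Lr t 1 := by
  have hrec : ∀ t, 1 ≤ t → t ≤ T → X t = (1 - γ) • Lr t + γ • (Lr t * X (t - 1)) := by
    intro t h1 h2
    rw [hXt t h1 h2, hLr, hγ]
    exact smul_add_smul_mul_eq_convex (by positivity) _ _
  intro t _ ht
  exact eq_rwrExpansion_of_recurrence Lr X γ T hX0 hrec t ht

theorem stmt_3 (n : ℕ) (hn : 1 ≤ n) (α β : ℝ) (hα : 0 < α) (hβ : 0 < β)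
    (hαβ : α + β < 1) (c γ : ℝ) (hc : c = 1 - α - β) (hγ : γ = β / (α + β))
    (T : ℕ) (A : ℕ → Matrix (Fin n) (Fin n) ℝ)
    (hA : ∀ t, 1 ≤ t → t ≤ T → RowStochastic (A t))
    (L : ℕ → Matrix (Fin n) (Fin n) ℝ)
    (hL : ∀ t, L t = 1 - c • (A t)ᵀ)
    (Lr : ℕ → Matrix (Fin n) (Fin n) ℝ)
    (hLr : ∀ t, Lr t = (α + β) • (L t)⁻¹)
    (X : ℕ → Matrix (Fin n) (Fin n) ℝ)
    (hX0 : X 0 = 1)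
    (hXt : ∀ t, 1 ≤ t → t ≤ T → X t = α • (L t)⁻¹ + β • ((L t)⁻¹ * X (t - 1))) :
    ∀ t, 1 ≤ t → t ≤ T →
      X t = (1 - γ) • (∑ i ∈ Finset.range (t - 1), γ ^ i • chainProd Lr t (t - i))
            + γ ^ (t - 1) • chainProd Lr t 1 :=
  stmt_3_general n α β hα hβ γ hγ T L Lr hLr X hX0 hXt
end

section
/- Let n ≥ 1, let Ã be an n×n real row-stochastic matrix, let 0 < c < 1, and let ℒ = I − c·Ãᵀ. Then ‖ℒ⁻¹ − I‖₁ = c/(1 − c), where ‖·‖₁ is the maximum absolute column sum norm. -/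
open Matrix BigOperators Finset

/-- The maximum absolute column sum (L1 operator) norm of a matrix. -/
noncomputable def colSumNorm {n : ℕ} (B : Matrix (Fin n) (Fin n) ℝ) : ℝ :=
  ⨆ j, ∑ i, |B i j|

section aux
attribute [local instance] Matrix.linftyOpNormedRing Matrix.linftyOpNormedAlgebra

lemma pow_entry_nonneg {n : ℕ} {B : Matrix (Fin n) (Fin n) ℝ}
    (hB : ∀ i j, 0 ≤ B i j) (k : ℕ) (i j : Fin n) : 0 ≤ (B ^ k) i j := by
  induction k generalizing i j with
  | zero => simp [Matrix.one_apply]; positivity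
  | succ m ih =>
    rw [pow_succ, Matrix.mul_apply]
    exact Finset.sum_nonneg fun l _ => mul_nonneg (ih i l) (hB l j)

lemma ring_inverse_nonneg {n : ℕ} {B : Matrix (Fin n) (Fin n) ℝ}
    (hBnn : ∀ i j, 0 ≤ B i j) (hB : ‖B‖ < 1) (i j : Fin n) :
    0 ≤ Ring.inverse (1 - B) i j := by
  have hsum : HasSum (fun k : ℕ => B ^ k) (Ring.inverse (1 - B)) :=
    hasSum_geom_series_inverse B hB
  have hcont : Continuous fun M : Matrix (Fin n) (Fin n) ℝ => M i j :=
    (continuous_apply j).comp (continuous_apply i)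
  have h2 : HasSum (fun k : ℕ => (B ^ k) i j) (Ring.inverse (1 - B) i j) :=
    hsum.map (AddMonoidHom.mk' (fun M : Matrix (Fin n) (Fin n) ℝ => M i j)
      (fun _ _ => rfl)) hcont
  exact hasSum_le (fun k => pow_entry_nonneg hBnn k i j) hasSum_zero h2

lemma norm_lt_one_of {n : ℕ} (hn : 1 ≤ n) {A : Matrix (Fin n) (Fin n) ℝ}
    (hA : RowStochastic A) {c : ℝ} (hc0 : 0 < c) (hc1 : c < 1) : ‖c • A‖ < 1 := by
  have : Nonempty (Fin n) := ⟨⟨0, hn⟩⟩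
  have key : ‖c • A‖₊ = c.toNNReal := by
    rw [Matrix.linfty_opNNNorm_def]
    have h1 : ∀ i : Fin n, ∑ j, ‖(c • A) i j‖₊ = c.toNNReal := by
      intro i
      apply NNReal.coe_injective
      push_cast
      have : ∀ j, ‖(c • A) i j‖ = c * A i j := by
        intro j
        rw [Matrix.smul_apply, smul_eq_mul, Real.norm_eq_abs,
          abs_of_nonneg (mul_nonneg hc0.le (hA.1 i j))]
      rw [Finset.sum_congr rfl fun j _ => this j, ← Finset.mul_sum, hA.2 i, mul_one,
        Real.coe_toNNReal _ hc0.le]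
    rw [Finset.sup_congr rfl fun i _ => h1 i]
    exact Finset.sup_const Finset.univ_nonempty _
  have : ‖c • A‖ = c := by
    rw [← coe_nnnorm, key, Real.coe_toNNReal _ hc0.le]
  linarith [this]
end aux

theorem stmt_8 (n : ℕ) (hn : 1 ≤ n) (A : Matrix (Fin n) (Fin n) ℝ)
    (hA : RowStochastic A) (c : ℝ) (hc0 : 0 < c) (hc1 : c < 1)
    (L : Matrix (Fin n) (Fin n) ℝ) (hL : L = 1 - c • Aᵀ) :
    colSumNorm (L⁻¹ - 1) = c / (1 - c) := by
  have : Nonempty (Fin n) := ⟨⟨0, hn⟩⟩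
  set B := c • A with hBdef
  have hBnn : ∀ i j, 0 ≤ B i j := fun i j =>
    mul_nonneg hc0.le (hA.1 i j)
  have hBrow : ∀ i, ∑ j, B i j = c := by
    intro i
    simp only [hBdef, Matrix.smul_apply, smul_eq_mul, ← Finset.mul_sum, hA.2 i, mul_one]
  letI := @Matrix.linftyOpNormedRing (Fin n) ℝ _ _ _
  letI := @Matrix.linftyOpNormedAlgebra ℝ (Fin n) ℝ _ _ _ _ _
  have hBnorm : ‖B‖ < 1 := norm_lt_one_of hn hA hc0 hc1
  set M := Ring.inverse (1 - B) with hMdef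
  have hMnn : ∀ i j, 0 ≤ M i j := ring_inverse_nonneg hBnn hBnorm
  have hU : IsUnit (1 - B) := isUnit_one_sub_of_norm_lt_one hBnorm
  have hMr : M * (1 - B) = 1 := Ring.inverse_mul_cancel _ hU
  have hMeq : M = 1 + M * B := by
    have h := hMr
    rw [mul_sub, mul_one, sub_eq_iff_eq_add] at h
    exact h
  -- row sums of M
  have hrow : ∀ i, ∑ j, M i j = 1 / (1 - c) := by
    intro i
    have h1 : ∑ j, M i j = 1 + c * ∑ k, M i k := by
      conv_lhs => rw [hMeq]
      have : ∀ j, (1 + M * B) i j = (1 : Matrix (Fin n) (Fin n) ℝ) i j + ∑ k, M i k * B k j := by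
        intro j; rw [Matrix.add_apply, Matrix.mul_apply]
      rw [Finset.sum_congr rfl fun j _ => this j, Finset.sum_add_distrib]
      congr 1
      · simp [Matrix.one_apply]
      · rw [Finset.sum_comm]
        rw [Finset.mul_sum]
        refine Finset.sum_congr rfl fun k _ => ?_
        rw [← Finset.mul_sum, hBrow k, mul_comm]
    have hc : 1 - c ≠ 0 := by linarith
    field_simp
    linarith [h1]
  -- L⁻¹ = Mᵀ
  have hLinv : L⁻¹ = Mᵀ := by
    have hLT : L = (1 - B)ᵀ := by
      rw [hL, Matrix.transpose_sub, Matrix.transpose_one, Matrix.transpose_smul]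
    rw [hLT, ← Matrix.transpose_nonsing_inv, Matrix.nonsing_inv_eq_ringInverse]
  have hMB : M - 1 = M * B := by
    conv_lhs => rw [hMeq]
    exact add_sub_cancel_left 1 (M * B)
  have hMBnn : ∀ i j, 0 ≤ (M - 1) i j := by
    intro i j
    rw [hMB, Matrix.mul_apply]
    exact Finset.sum_nonneg fun k _ => mul_nonneg (hMnn i k) (hBnn k j)
  have hcol : ∀ j : Fin n, ∑ i, |(L⁻¹ - 1) i j| = c / (1 - c) := by
    intro j
    have : ∀ i, (L⁻¹ - 1) i j = (M - 1) j i := by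
      intro i
      rw [hLinv, Matrix.sub_apply, Matrix.sub_apply, Matrix.transpose_apply,
        Matrix.one_apply, Matrix.one_apply]
      by_cases h : i = j
      · simp [h]
      · simp [h, Ne.symm h]
    rw [Finset.sum_congr rfl fun i _ => by rw [this i, abs_of_nonneg (hMBnn j i)]]
    have : ∑ i, (M - 1) j i = 1 / (1 - c) - 1 := by
      simp only [Matrix.sub_apply, Finset.sum_sub_distrib, hrow j]
      congr 1
      simp [Matrix.one_apply]
    rw [this]
    have hc : 1 - c ≠ 0 := by linarith
    field_simp
    ring
  rw [colSumNorm]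
  simp_rw [hcol]
  exact ciSup_const
end

section
/- Let n ≥ 1, let α, β > 0 with α + β < 1, set c = 1 − α − β, and let Ã₁, …, Ã_T be n×n real row-stochastic matrices with ℒ_t = I − c·Ã_tᵀ. Define X₀ = I and X_t = α·ℒ_t⁻¹ + β·ℒ_t⁻¹·X_{t−1} for t ≥ 1. Fix any s and let π_{t,s} = X_t·e_s be the s-th column of X_t. Then for every t ≥ 0, π_{t,s} is a probability vector: its entries are nonnegative and sum to 1. -/
/-!
Write `L = 1 - c • Aᵀ` for a row-stochastic `A` and `0 ≤ c < 1`. Since `Aᵀ` preserves coordinate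
sums, `L` multiplies them by `1 - c`; and `L⁻¹` is entrywise nonnegative, being the transpose of
`(1 - c • A)⁻¹`, whose nonnegativity (and existence) follows from the discrete minimum principle
for `1 - c • A`. Hence `L⁻¹` maps nonnegative vectors of sum `1 - c = α + β` into the simplex,
and `X t *ᵥ e = L⁻¹ *ᵥ (α • e + β • (X (t - 1) *ᵥ e))` is such an image.
-/

open Matrix BigOperators Finset

namespace RowStochastic

variable {n : ℕ} {A : Matrix (Fin n) (Fin n) ℝ} {c : ℝ}

theorem sum_transpose_mulVec (hA : RowStochastic A) (v : Fin n → ℝ) :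
    ∑ i, (Aᵀ *ᵥ v) i = ∑ i, v i := by
  have hA1 : A *ᵥ 1 = 1 := funext fun i => by simpa [mulVec, dotProduct] using hA.2 i
  rw [← one_dotProduct, dotProduct_mulVec, vecMul_transpose, hA1, one_dotProduct]

-- Discrete minimum principle, applied at a minimum `i₀` of `x`.
theorem nonneg_of_one_sub_smul_mulVec_nonneg (hA : RowStochastic A) (hc0 : 0 ≤ c) (hc1 : c < 1)
    {x : Fin n → ℝ} (hx : ∀ i, 0 ≤ ((1 - c • A) *ᵥ x) i) (i : Fin n) : 0 ≤ x i := by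
  have : Nonempty (Fin n) := ⟨i⟩
  obtain ⟨i₀, -, hmin⟩ := Finset.exists_min_image univ x univ_nonempty
  have hconv : x i₀ ≤ (A *ᵥ x) i₀ :=
    calc x i₀ = ∑ j, A i₀ j * x i₀ := by rw [← Finset.sum_mul, hA.2 i₀, one_mul]
      _ ≤ ∑ j, A i₀ j * x j :=
        Finset.sum_le_sum fun j _ => mul_le_mul_of_nonneg_left (hmin j (mem_univ j)) (hA.1 i₀ j)
  have hmin_nonneg : 0 ≤ (1 - c) * x i₀ :=
    calc 0 ≤ ((1 - c • A) *ᵥ x) i₀ := hx i₀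
      _ = x i₀ - c * (A *ᵥ x) i₀ := by simp [sub_mulVec, smul_mulVec]
      _ ≤ x i₀ - c * x i₀ := by gcongr
      _ = (1 - c) * x i₀ := by ring
  exact ((mul_nonneg_iff_of_pos_left (by linarith)).mp hmin_nonneg).trans (hmin i (mem_univ i))

theorem isUnit_det_one_sub_smul (hA : RowStochastic A) (hc0 : 0 ≤ c) (hc1 : c < 1) :
    IsUnit (1 - c • A).det := by
  rw [← isUnit_iff_isUnit_det, ← mulVec_injective_iff_isUnit]
  intro x y hxy
  have hker : (1 - c • A) *ᵥ (x - y) = 0 := by rw [mulVec_sub, hxy, sub_self]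
  have hker' : (1 - c • A) *ᵥ (y - x) = 0 := by rw [mulVec_sub, hxy, sub_self]
  funext i
  have h₁ := hA.nonneg_of_one_sub_smul_mulVec_nonneg hc0 hc1 (x := x - y) (by simp [hker]) i
  have h₂ := hA.nonneg_of_one_sub_smul_mulVec_nonneg hc0 hc1 (x := y - x) (by simp [hker']) i
  simp only [Pi.sub_apply, sub_nonneg] at h₁ h₂
  exact le_antisymm h₂ h₁

theorem inv_one_sub_smul_nonneg (hA : RowStochastic A) (hc0 : 0 ≤ c) (hc1 : c < 1) (i j : Fin n) :
    0 ≤ (1 - c • A)⁻¹ i j := by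
  have hcol : (1 - c • A) *ᵥ ((1 - c • A)⁻¹ *ᵥ Pi.single j 1) = Pi.single j 1 := by
    rw [mulVec_mulVec, mul_nonsing_inv _ (hA.isUnit_det_one_sub_smul hc0 hc1), one_mulVec]
  have := hA.nonneg_of_one_sub_smul_mulVec_nonneg hc0 hc1 (hcol ▸ (single_mem_stdSimplex ℝ j).1) i
  rwa [mulVec_single_one, col_apply] at this

theorem sum_one_sub_smul_transpose_mulVec (hA : RowStochastic A) (w : Fin n → ℝ) :
    ∑ i, ((1 - c • Aᵀ) *ᵥ w) i = (1 - c) * ∑ i, w i := by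
  simp only [sub_mulVec, one_mulVec, smul_mulVec, Pi.sub_apply, Pi.smul_apply, smul_eq_mul,
    Finset.sum_sub_distrib, ← Finset.mul_sum, hA.sum_transpose_mulVec]
  ring

theorem inv_one_sub_smul_transpose_mulVec_mem_stdSimplex (hA : RowStochastic A) (hc0 : 0 ≤ c)
    (hc1 : c < 1) {v : Fin n → ℝ} (hv : ∀ i, 0 ≤ v i) (hsum : ∑ i, v i = 1 - c) :
    (1 - c • Aᵀ)⁻¹ *ᵥ v ∈ stdSimplex ℝ (Fin n) := by
  have hT : 1 - c • Aᵀ = (1 - c • A)ᵀ := by rw [transpose_sub, transpose_one, transpose_smul]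
  have hunit : IsUnit (1 - c • A)ᵀ.det := by
    rw [det_transpose]; exact hA.isUnit_det_one_sub_smul hc0 hc1
  refine ⟨fun i => ?_, ?_⟩
  · rw [hT, ← transpose_nonsing_inv]
    simp only [mulVec, dotProduct, transpose_apply]
    exact Finset.sum_nonneg fun j _ => mul_nonneg (hA.inv_one_sub_smul_nonneg hc0 hc1 j i) (hv j)
  · have hw : (1 - c • Aᵀ) *ᵥ ((1 - c • Aᵀ)⁻¹ *ᵥ v) = v := by
      rw [mulVec_mulVec, hT, mul_nonsing_inv _ hunit, one_mulVec]
    have hscaled := hA.sum_one_sub_smul_transpose_mulVec (c := c) ((1 - c • Aᵀ)⁻¹ *ᵥ v)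
    rw [hw, hsum] at hscaled
    exact (mul_eq_left₀ (by linarith)).mp hscaled.symm

end RowStochastic

theorem stmt_18_general (n : ℕ) (α β : ℝ) (hα : 0 < α) (hβ : 0 < β)
    (hαβ : α + β < 1) (c : ℝ) (hc : c = 1 - α - β)
    (T : ℕ) (A : ℕ → Matrix (Fin n) (Fin n) ℝ)
    (hA : ∀ t, 1 ≤ t → t ≤ T → RowStochastic (A t))
    (L : ℕ → Matrix (Fin n) (Fin n) ℝ)
    (hL : ∀ t, L t = 1 - c • (A t)ᵀ)
    (X : ℕ → Matrix (Fin n) (Fin n) ℝ)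
    (hX0 : X 0 = 1)
    (hXt : ∀ t, 1 ≤ t → t ≤ T → X t = α • (L t)⁻¹ + β • ((L t)⁻¹ * X (t - 1)))
    (s : Fin n) (e : Fin n → ℝ) (he : e = Pi.single s 1) :
    ∀ t, t ≤ T →
      (∀ i, 0 ≤ (X t *ᵥ e) i) ∧ ∑ i, (X t *ᵥ e) i = 1 := by
  have he_mem : e ∈ stdSimplex ℝ (Fin n) := he ▸ single_mem_stdSimplex ℝ s
  intro t
  induction t with
  | zero => intro _; rw [hX0, one_mulVec]; exact he_mem
  | succ t ih =>
    intro ht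
    obtain ⟨hp_nonneg, hp_sum⟩ : X t *ᵥ e ∈ stdSimplex ℝ (Fin n) := ih (by omega)
    have hstep : X (t + 1) *ᵥ e = (L (t + 1))⁻¹ *ᵥ (α • e + β • (X t *ᵥ e)) := by
      rw [hXt (t + 1) (by omega) ht, add_mulVec, mulVec_add, smul_mulVec, smul_mulVec, mulVec_smul,
        mulVec_smul, ← mulVec_mulVec, Nat.add_sub_cancel]
    rw [hstep, hL]
    refine (hA (t + 1) (by omega) ht).inv_one_sub_smul_transpose_mulVec_mem_stdSimplex
      (by linarith) (by linarith) (fun i => ?_) ?_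
    · simp only [Pi.add_apply, Pi.smul_apply, smul_eq_mul]
      exact add_nonneg (mul_nonneg hα.le (he_mem.1 i)) (mul_nonneg hβ.le (hp_nonneg i))
    · simp only [Pi.add_apply, Pi.smul_apply, smul_eq_mul, Finset.sum_add_distrib, ← Finset.mul_sum,
        he_mem.2, hp_sum]
      linarith

theorem stmt_18 (n : ℕ) (hn : 1 ≤ n) (α β : ℝ) (hα : 0 < α) (hβ : 0 < β)
    (hαβ : α + β < 1) (c : ℝ) (hc : c = 1 - α - β)
    (T : ℕ) (A : ℕ → Matrix (Fin n) (Fin n) ℝ)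
    (hA : ∀ t, 1 ≤ t → t ≤ T → RowStochastic (A t))
    (L : ℕ → Matrix (Fin n) (Fin n) ℝ)
    (hL : ∀ t, L t = 1 - c • (A t)ᵀ)
    (X : ℕ → Matrix (Fin n) (Fin n) ℝ)
    (hX0 : X 0 = 1)
    (hXt : ∀ t, 1 ≤ t → t ≤ T → X t = α • (L t)⁻¹ + β • ((L t)⁻¹ * X (t - 1)))
    (s : Fin n) (e : Fin n → ℝ) (he : e = Pi.single s 1) :
    ∀ t, t ≤ T →
      (∀ i, 0 ≤ (X t *ᵥ e) i) ∧ ∑ i, (X t *ᵥ e) i = 1 :=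
  stmt_18_general n α β hα hβ hαβ c hc T A hA L hL X hX0 hXt s e he
end
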